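/- Suppose f : ℝⁿ → ℝ is Lipschitz continuous near x̄ ∈ ℝⁿ. If 0 ∈ co ∇̂f(x̄), then 0 ∈ ∂̄f(x̄) = co ∇̄f(x̄). -/

import Mathlib

open Filter Topology
open scoped RealInnerProductSpace ENNReal

/-- The auxiliary normalized gradient map `∇̃f` from the paper: a singleton containing the
normalized gradient at differentiability points with nonzero gradient, `{0}` where `f` is
locally constant, and empty otherwise. -/
noncomputable def tGrad {n : ℕ} (f : EuclideanSpace ℝ (Fin n) → ℝ)
    (x : EuclideanSpace ℝ (Fin n)) : Set (EuclideanSpace ℝ (Fin n)) :=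
  {v | (DifferentiableAt ℝ f x ∧ gradient f x ≠ 0 ∧ v = ‖gradient f x‖⁻¹ • gradient f x) ∨
       ((∀ᶠ y in 𝓝 x, f y = f x) ∧ v = 0)}

/-- The normalized subdifferential `∇̂f`: the graph closure of `∇̃f`. -/
noncomputable def hGrad {n : ℕ} (f : EuclideanSpace ℝ (Fin n) → ℝ)
    (x : EuclideanSpace ℝ (Fin n)) : Set (EuclideanSpace ℝ (Fin n)) :=
  {v | ∃ xs vs : ℕ → EuclideanSpace ℝ (Fin n),
      (∀ k, vs k ∈ tGrad f (xs k)) ∧ Tendsto xs atTop (𝓝 x) ∧ Tendsto vs atTop (𝓝 v)}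

/-- The Bouligand subdifferential `∇̄f`: limits of gradients along sequences of
differentiability points. -/
noncomputable def bGrad {n : ℕ} (f : EuclideanSpace ℝ (Fin n) → ℝ)
    (x : EuclideanSpace ℝ (Fin n)) : Set (EuclideanSpace ℝ (Fin n)) :=
  {v | ∃ xs : ℕ → EuclideanSpace ℝ (Fin n),
      (∀ k, DifferentiableAt ℝ f (xs k)) ∧ Tendsto xs atTop (𝓝 x) ∧
      Tendsto (fun k => gradient f (xs k)) atTop (𝓝 v)}


open Set in

lemma isCompact_convexHull_aux {n : ℕ} {S : Set (EuclideanSpace ℝ (Fin n))}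
    (hS : IsCompact S) : IsCompact (convexHull ℝ S) := by
  rcases S.eq_empty_or_nonempty with rfl | ⟨s₀, hs₀⟩
  · simpa using isCompact_empty
  · set g : (Fin (n+1) → ℝ) × (Fin (n+1) → EuclideanSpace ℝ (Fin n)) → EuclideanSpace ℝ (Fin n) :=
      fun p => ∑ i, p.1 i • p.2 i with hgdef
    have hg : Continuous g := by
      apply continuous_finset_sum
      intro i _
      exact ((continuous_apply i).comp continuous_fst).smul
        ((continuous_apply i).comp continuous_snd)
    have hcomp : IsCompact ((stdSimplex ℝ (Fin (n+1))) ×ˢ (Set.univ.pi fun _ : Fin (n+1) => S)) :=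
      IsCompact.prod (isCompact_stdSimplex (𝕜 := ℝ) (ι := Fin (n+1))) (isCompact_univ_pi fun _ => hS)
    have him : convexHull ℝ S =
        g '' ((stdSimplex ℝ (Fin (n+1))) ×ˢ (Set.univ.pi fun _ : Fin (n+1) => S)) := by
      apply Subset.antisymm
      · intro x hx
        obtain ⟨ι, hι, z, w, hzS, hai, hw0, hw1, hxeq⟩ :=
          eq_pos_convex_span_of_mem_convexHull hx
        have hcard : Fintype.card ι ≤ n + 1 := by
          have h1 := hai.card_le_finrank_succ
          have h2 := Submodule.finrank_le (vectorSpan ℝ (Set.range z))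
          have h3 : Module.finrank ℝ (EuclideanSpace ℝ (Fin n)) = n :=
            finrank_euclideanSpace_fin
          omega
        let e : ι ↪ Fin (n+1) :=
          (Fintype.equivFin ι).toEmbedding.trans (Fin.castLEEmb hcard)
        have hinj : Function.Injective e := e.injective
        have hsum : ∀ (M : Type) (_ : AddCommMonoid M) (F : ι → M),
            ∑ j, Function.extend e F 0 j = ∑ i, F i := by
          intro M _ F
          rw [← Finset.sum_subset (Finset.subset_univ (Finset.univ.image e))]
          · rw [Finset.sum_image (fun a _ b _ h => hinj h)]
            exact Finset.sum_congr rfl fun i _ => hinj.extend_apply F 0 i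
          · intro j _ hj
            apply Function.extend_apply'
            rintro ⟨i, rfl⟩
            exact hj (Finset.mem_image_of_mem e (Finset.mem_univ i))
        refine ⟨(Function.extend e w 0, Function.extend e z (fun _ => s₀)), ⟨⟨?_, ?_⟩, ?_⟩, ?_⟩
        · intro j
          show 0 ≤ Function.extend e w 0 j
          rcases em (∃ i, e i = j) with ⟨i, rfl⟩ | h
          · rw [hinj.extend_apply]; exact (hw0 i).le
          · rw [Function.extend_apply' _ _ _ h]; rfl
        · show ∑ j, Function.extend e w 0 j = 1
          rw [hsum ℝ _ w, hw1]
        · intro j _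
          show Function.extend e z (fun _ => s₀) j ∈ S
          rcases em (∃ i, e i = j) with ⟨i, rfl⟩ | h
          · rw [hinj.extend_apply]; exact hzS ⟨i, rfl⟩
          · rw [Function.extend_apply' _ _ _ h]; exact hs₀
        · show ∑ j, Function.extend e w 0 j • Function.extend e z (fun _ => s₀) j = x
          have hterm : ∀ j, Function.extend e w 0 j • Function.extend e z (fun _ => s₀) j
              = Function.extend e (fun i => w i • z i) 0 j := by
            intro j
            rcases em (∃ i, e i = j) with ⟨i, rfl⟩ | h
            · rw [hinj.extend_apply, hinj.extend_apply, hinj.extend_apply]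
            · rw [Function.extend_apply' _ _ _ h, Function.extend_apply' _ _ _ h,
                Function.extend_apply' _ _ _ h]
              simp
          calc ∑ j, Function.extend e w 0 j • Function.extend e z (fun _ => s₀) j
              = ∑ j, Function.extend e (fun i => w i • z i) 0 j :=
                Finset.sum_congr rfl fun j _ => hterm j
            _ = ∑ i, w i • z i := hsum _ _ _
            _ = x := hxeq
      · rintro x ⟨⟨w, z⟩, ⟨⟨hw0, hw1⟩, hz⟩, rfl⟩
        exact (convex_convexHull ℝ S).sum_mem (fun i _ => hw0 i) hw1
          (fun i _ => subset_convexHull ℝ S (hz i (Set.mem_univ i)))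
    rw [him]
    exact hcomp.image hg

lemma mem_bGrad_iff' {n : ℕ} (f : EuclideanSpace ℝ (Fin n) → ℝ) (xb v : EuclideanSpace ℝ (Fin n)) :
    v ∈ bGrad f xb ↔
    ∀ ε > 0, ∃ x, DifferentiableAt ℝ f x ∧ dist x xb < ε ∧ dist (gradient f x) v < ε := by
  constructor
  · rintro ⟨xs, hd, hx, hg⟩ ε hε
    obtain ⟨N1, hN1⟩ := (Metric.tendsto_atTop.1 hx) ε hε
    obtain ⟨N2, hN2⟩ := (Metric.tendsto_atTop.1 hg) ε hε
    exact ⟨xs (max N1 N2), hd _, hN1 _ (le_max_left _ _), hN2 _ (le_max_right _ _)⟩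
  · intro h
    choose x hd hx hg using fun k : ℕ => h (1/(k+1)) (by positivity)
    refine ⟨x, hd, ?_, ?_⟩
    · rw [tendsto_iff_dist_tendsto_zero]
      exact squeeze_zero (fun k => dist_nonneg) (fun k => (hx k).le)
        tendsto_one_div_add_atTop_nhds_zero_nat
    · rw [tendsto_iff_dist_tendsto_zero]
      exact squeeze_zero (fun k => dist_nonneg) (fun k => (hg k).le)
        tendsto_one_div_add_atTop_nhds_zero_nat

lemma grad_norm_le' {n : ℕ} {f : EuclideanSpace ℝ (Fin n) → ℝ} {x : EuclideanSpace ℝ (Fin n)}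
    {K : NNReal} {s : Set (EuclideanSpace ℝ (Fin n))}
    (hd : DifferentiableAt ℝ f x) (hs : s ∈ 𝓝 x) (hl : LipschitzOnWith K f s) :
    ‖gradient f x‖ ≤ K := by
  have h1 : ‖fderiv ℝ f x‖ ≤ K := hd.hasFDerivAt.le_of_lipschitzOn hs hl
  show ‖(InnerProductSpace.toDual ℝ _).symm (fderiv ℝ f x)‖ ≤ K
  rwa [LinearIsometryEquiv.norm_map]

lemma locconst_grad {n : ℕ} {f : EuclideanSpace ℝ (Fin n) → ℝ} {x : EuclideanSpace ℝ (Fin n)}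
    (h : ∀ᶠ y in 𝓝 x, f y = f x) : DifferentiableAt ℝ f x ∧ gradient f x = 0 := by
  have heq : f =ᶠ[𝓝 x] fun _ => f x := h
  refine ⟨heq.differentiableAt_iff.mpr (differentiableAt_const _), ?_⟩
  rw [heq.gradient_eq]
  exact gradient_const _ _

/-- If `f` is Lipschitz continuous near `xb` and `0 ∈ co ∇̂f(xb)`, then
`0 ∈ ∂̄f(xb) = co ∇̄f(xb)`. -/
theorem stmt4 {n : ℕ} (f : EuclideanSpace ℝ (Fin n) → ℝ) (xb : EuclideanSpace ℝ (Fin n))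
    (hf : ∃ K : NNReal, ∃ s ∈ 𝓝 xb, LipschitzOnWith K f s)
    (h0 : (0 : EuclideanSpace ℝ (Fin n)) ∈ convexHull ℝ (hGrad f xb)) :
    (0 : EuclideanSpace ℝ (Fin n)) ∈ convexHull ℝ (bGrad f xb) := by
  classical
  by_contra hc
  obtain ⟨K₀, s₀, hs₀, hK₀⟩ := hf
  set K : NNReal := K₀ + 1 with hKdef
  have hKpos : (0:ℝ) < K := by
    have : (1:NNReal) ≤ K := le_add_self
    exact_mod_cast lt_of_lt_of_le zero_lt_one this
  have hK : LipschitzOnWith K f s₀ := fun x hx y hy =>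
    le_trans (hK₀ hx hy) (mul_le_mul_left (by exact_mod_cast le_add_right le_rfl) _)
  obtain ⟨r, hr, hball⟩ := Metric.mem_nhds_iff.mp hs₀
  have hKball : LipschitzOnWith K f (Metric.ball xb r) := hK.mono hball
  -- gradient bound on the ball
  have hgradbd : ∀ x ∈ Metric.ball xb r, DifferentiableAt ℝ f x → ‖gradient f x‖ ≤ K := by
    intro x hx hd
    exact grad_norm_le' hd (Metric.isOpen_ball.mem_nhds hx) hKball
  set S := bGrad f xb with hSdef
  -- S is bounded
  have hSbd : S ⊆ Metric.closedBall 0 K := by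
    rintro v ⟨xs, hd, hx, hg⟩
    rw [Metric.mem_closedBall, dist_zero_right]
    have hev : ∀ᶠ k in atTop, xs k ∈ Metric.ball xb r := hx (Metric.ball_mem_nhds xb hr)
    refine le_of_tendsto (hg.norm) ?_
    filter_upwards [hev] with k hk
    exact hgradbd _ hk (hd k)
  -- S is closed
  have hSclosed : IsClosed S := by
    refine isClosed_of_closure_subset ?_
    intro v hv
    rw [hSdef, mem_bGrad_iff']
    intro ε hε
    obtain ⟨u, hu, hud⟩ := Metric.mem_closure_iff.1 hv (ε/2) (by positivity)
    obtain ⟨x, hd, hx, hg⟩ := (mem_bGrad_iff' f xb u).1 hu (ε/2) (by positivity)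
    refine ⟨x, hd, lt_of_lt_of_le hx (by linarith), ?_⟩
    calc dist (gradient f x) v ≤ dist (gradient f x) u + dist u v := dist_triangle _ _ _
      _ < ε/2 + ε/2 := by
          rw [dist_comm u v]; exact add_lt_add hg hud
      _ = ε := by ring
  have hScompact : IsCompact S :=
    (isCompact_closedBall (0 : EuclideanSpace ℝ (Fin n)) K).of_isClosed_subset hSclosed hSbd
  have hcoS : IsCompact (convexHull ℝ S) := isCompact_convexHull_aux hScompact
  obtain ⟨w, c, hwc, hsep⟩ :=
    geometric_hahn_banach_point_closed (convex_convexHull ℝ S) hcoS.isClosed hc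
  have hc0 : 0 < c := by simpa using hwc
  -- the usc claim
  have claim : ∃ δ : ℝ, 0 < δ ∧ δ ≤ r ∧
      ∀ x, dist x xb < δ → DifferentiableAt ℝ f x → c ≤ w (gradient f x) := by
    by_contra h
    push_neg at h
    have hx : ∀ k : ℕ, ∃ x, dist x xb < min r (1/(k+1)) ∧ DifferentiableAt ℝ f x ∧
        w (gradient f x) < c := by
      intro k
      obtain ⟨x, hx1, hx2, hx3⟩ := h (min r (1/(k+1))) (by positivity) (min_le_left _ _)
      exact ⟨x, hx1, hx2, hx3⟩
    choose x hx1 hx2 hx3 using hx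
    have hxtend : Tendsto x atTop (𝓝 xb) := by
      rw [tendsto_iff_dist_tendsto_zero]
      exact squeeze_zero (fun k => dist_nonneg)
        (fun k => ((hx1 k).trans_le (min_le_right _ _)).le)
        tendsto_one_div_add_atTop_nhds_zero_nat
    have hbnd : ∀ k, gradient f (x k) ∈ Metric.closedBall (0 : EuclideanSpace ℝ (Fin n)) K := by
      intro k
      rw [Metric.mem_closedBall, dist_zero_right]
      exact hgradbd _ (Metric.mem_ball.2 ((hx1 k).trans_le (min_le_left _ _))) (hx2 k)
    obtain ⟨v, hvK, φ, hφ, hgv⟩ :=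
      (isCompact_closedBall (0 : EuclideanSpace ℝ (Fin n)) K).tendsto_subseq hbnd
    have hvS : v ∈ S := ⟨x ∘ φ, fun k => hx2 _, hxtend.comp hφ.tendsto_atTop, hgv⟩
    have h1 : c < w v := hsep v (subset_convexHull ℝ S hvS)
    have h2 : w v ≤ c := by
      refine le_of_tendsto ((w.continuous.tendsto v).comp hgv) ?_
      exact Filter.Eventually.of_forall fun k => (hx3 (φ k)).le
    linarith
  obtain ⟨δ, hδ0, hδr, hclaim⟩ := claim
  -- hGrad is contained in a halfspace
  have hsub : hGrad f xb ⊆ {v | c / K ≤ w v} := by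
    rintro v ⟨xs, vs, hvst, hxs, hvs⟩
    have hev : ∀ᶠ k in atTop, xs k ∈ Metric.ball xb δ := hxs (Metric.ball_mem_nhds xb hδ0)
    have hev2 : ∀ᶠ k in atTop, c / K ≤ w (vs k) := by
      filter_upwards [hev] with k hk
      have hkd : dist (xs k) xb < δ := Metric.mem_ball.1 hk
      rcases hvst k with ⟨hd, hg0, hveq⟩ | ⟨hloc, hveq⟩
      · have hball' : xs k ∈ Metric.ball xb r := Metric.mem_ball.2 (hkd.trans_le hδr)
        have hgle : ‖gradient f (xs k)‖ ≤ K := hgradbd _ hball' hd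
        have hgpos : 0 < ‖gradient f (xs k)‖ := norm_pos_iff.2 hg0
        have hcle : c ≤ w (gradient f (xs k)) := hclaim _ hkd hd
        have h5 : c / K ≤ w (gradient f (xs k)) / ‖gradient f (xs k)‖ :=
          div_le_div₀ (by linarith) hcle hgpos hgle
        rw [hveq, map_smul, smul_eq_mul, ← div_eq_inv_mul]
        exact h5
      · obtain ⟨hd, hgz⟩ := locconst_grad hloc
        have := hclaim _ hkd hd
        rw [hgz, map_zero] at this
        linarith
    have : Tendsto (fun k => w (vs k)) atTop (𝓝 (w v)) := (w.continuous.tendsto v).comp hvs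
    exact ge_of_tendsto this hev2
  have hcvx : Convex ℝ {v : EuclideanSpace ℝ (Fin n) | c / K ≤ w v} :=
    convex_halfSpace_ge ⟨w.map_add, w.map_smul⟩ (c / K)
  have hfinal : (0 : EuclideanSpace ℝ (Fin n)) ∈ {v : EuclideanSpace ℝ (Fin n) | c / K ≤ w v} :=
    convexHull_min hsub hcvx h0
  have : c / K ≤ 0 := by simpa using hfinal
  have : 0 < c / K := div_pos hc0 hKpos
  linarith
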